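/- Inversion theorem for the two-sided quaternion Fourier transform: if f : ℝ² → ℍ is continuous and integrable and its two-sided quaternion Fourier transform F[f] is integrable, then for every (x1, x2) ∈ ℝ², (1/(2π)) ∫_{ℝ²} exp(i·w1·x1) · F[f](w1,w2) · exp(j·w2·x2) dw1 dw2 = f(x1, x2). -/

import Mathlib

/-!
Write `e₊ = 1 + k`, `e₋ = 1 - k` and view `ℂ` as the span of `1, i` in `ℍ`. Every quaternion is
`q = ½ (P q · e₊ + M q · e₋)` for two complex numbers `P q`, `M q`, and since `e₊ j = -i e₊`,
`e₋ j = i e₋`, the two-sided kernel acts on them by characters: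
`P (e^{iα} q e^{jβ}) = e^{i(α-β)} P q` and `M (e^{iα} q e^{jβ}) = e^{i(α+β)} M q`.
So `P` and `M` turn the quaternion Fourier transform of `f` into ordinary complex Fourier
transforms of `P ∘ f` and `M ∘ f` on `ℝ²` (for `P` with the second frequency reversed), and the
theorem follows from the classical Fourier inversion theorem applied to each of them.
-/

open MeasureTheory Real Filter
open scoped Quaternion ENNReal

/-- The quaternion imaginary unit `i`. -/
noncomputable def qi : ℍ[ℝ] := ⟨0, 1, 0, 0⟩

/-- The quaternion imaginary unit `j`. -/
noncomputable def qj : ℍ[ℝ] := ⟨0, 0, 1, 0⟩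

/-- `exp (i t) = cos t + i sin t` as a quaternion. -/
noncomputable def expI (t : ℝ) : ℍ[ℝ] := ⟨Real.cos t, Real.sin t, 0, 0⟩

/-- `exp (j t) = cos t + j sin t` as a quaternion. -/
noncomputable def expJ (t : ℝ) : ℍ[ℝ] := ⟨Real.cos t, 0, Real.sin t, 0⟩

/-- The two-sided quaternion Fourier transform of `f : ℝ² → ℍ`:
`F[f](w₁,w₂) = (1/(2π)) ∫ exp(-i w₁ x₁) f(x) exp(-j w₂ x₂) dx`. -/
noncomputable def QFT (f : ℝ × ℝ → ℍ[ℝ]) (w₁ w₂ : ℝ) : ℍ[ℝ] :=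
  (1 / (2 * π)) • ∫ x : ℝ × ℝ, expI (-(w₁ * x.1)) * f x * expJ (-(w₂ * x.2))

/-- The quaternion Hardy filter system function
`H₃(w₁,w₂,s₁,s₂) = e^{-|w₁|s₁} e^{-|w₂|s₂} (1+sgn w₁)(1+sgn w₂)`. -/
noncomputable def H3 (w₁ w₂ s₁ s₂ : ℝ) : ℝ :=
  Real.exp (-|w₁| * s₁) * Real.exp (-|w₂| * s₂) * (1 + Real.sign w₁) * (1 + Real.sign w₂)

/-- The filtered signal `f_Q(x₁,x₂,s₁,s₂) =
(1/(2π)) ∫ exp(i w₁ x₁) H₃(w₁,w₂,s₁,s₂) F[f](w₁,w₂) exp(j w₂ x₂) dw`. -/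
noncomputable def fQ (f : ℝ × ℝ → ℍ[ℝ]) (x₁ x₂ s₁ s₂ : ℝ) : ℍ[ℝ] :=
  (1 / (2 * π)) • ∫ w : ℝ × ℝ,
    expI (w.1 * x₁) * (H3 w.1 w.2 s₁ s₂ • QFT f w.1 w.2) * expJ (w.2 * x₂)

open scoped Complex FourierTransform RealInnerProductSpace
open Complex (I)

section FourierInversion

variable {E : Type*} [NormedAddCommGroup E] [NormedSpace ℂ E] [CompleteSpace E]

theorem integral_exp_inner_smul_integral_exp_neg_inner {V : Type*} [NormedAddCommGroup V]
    [InnerProductSpace ℝ V] [FiniteDimensional ℝ V] [MeasurableSpace V] [BorelSpace V]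
    {g : V → E} (hg : Integrable g) {x : V} (hx : ContinuousAt g x)
    (hĝ : Integrable fun w => ∫ y, cexp (↑(-⟪w, y⟫) * I) • g y) :
    ∫ w, cexp (↑⟪w, x⟫ * I) • ∫ y, cexp (↑(-⟪w, y⟫) * I) • g y
      = (2 * π) ^ Module.finrank ℝ V • g x := by
  set ĝ := fun w => ∫ y, cexp (↑(-⟪w, y⟫) * I) • g y
  have h2π : (2 * π : ℝ) ≠ 0 := by positivity
  have h𝓕 : 𝓕 g = fun ξ => ĝ ((2 * π) • ξ) := by
    ext ξ
    rw [Real.fourier_eq']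
    congr 1 with y
    rw [real_inner_comm, real_inner_smul_left]
    ring_nf
  have h𝓕int : Integrable (𝓕 g) := h𝓕 ▸ (integrable_comp_smul_iff volume ĝ h2π).mpr hĝ
  calc ∫ w, cexp (↑⟪w, x⟫ * I) • ĝ w
      = (2 * π) ^ Module.finrank ℝ V • ∫ ξ, cexp (↑⟪(2 * π) • ξ, x⟫ * I) • ĝ ((2 * π) • ξ) := by
        rw [Measure.integral_comp_smul_of_nonneg volume (fun w => cexp (↑⟪w, x⟫ * I) • ĝ w)
          (2 * π) (hR := by positivity), smul_inv_smul₀ (pow_ne_zero _ h2π)]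
    _ = (2 * π) ^ Module.finrank ℝ V • 𝓕⁻ (𝓕 g) x := by
        rw [Real.fourierInv_eq', h𝓕]
        simp_rw [real_inner_smul_left]
    _ = (2 * π) ^ Module.finrank ℝ V • g x := by rw [hg.fourierInv_fourier_eq h𝓕int hx]

-- `ℝ × ℝ` carries the sup norm, so Fourier inversion is transported from the Euclidean plane.
noncomputable def euclideanTwoEquivProd : EuclideanSpace ℝ (Fin 2) ≃ᵐ ℝ × ℝ :=
  (MeasurableEquiv.toLp 2 (Fin 2 → ℝ)).symm.trans MeasurableEquiv.finTwoArrow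

theorem measurePreserving_euclideanTwoEquivProd :
    MeasurePreserving euclideanTwoEquivProd :=
  (volume_preserving_finTwoArrow ℝ).comp
    (EuclideanSpace.volume_preserving_symm_measurableEquiv_toLp (Fin 2))

theorem continuous_euclideanTwoEquivProd : Continuous euclideanTwoEquivProd :=
  (EuclideanSpace.proj (0 : Fin 2)).continuous.prodMk (EuclideanSpace.proj (1 : Fin 2)).continuous

theorem inner_eq_euclideanTwoEquivProd (ξ η : EuclideanSpace ℝ (Fin 2)) :
    ⟪ξ, η⟫ = (euclideanTwoEquivProd ξ).1 * (euclideanTwoEquivProd η).1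
      + (euclideanTwoEquivProd ξ).2 * (euclideanTwoEquivProd η).2 := by
  simp [euclideanTwoEquivProd, PiLp.inner_apply, Fin.sum_univ_two, mul_comm]

noncomputable def planeFourier (g : ℝ × ℝ → E) (w : ℝ × ℝ) : E :=
  (1 / (2 * π)) • ∫ y, cexp (↑(-(w.1 * y.1 + w.2 * y.2)) * I) • g y

noncomputable def planeFourierInv (G : ℝ × ℝ → E) (x : ℝ × ℝ) : E :=
  (1 / (2 * π)) • ∫ w, cexp (↑(w.1 * x.1 + w.2 * x.2) * I) • G w

theorem MeasureTheory.Integrable.planeFourierInv_planeFourier_eq {g : ℝ × ℝ → E}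
    (hg : Integrable g) (hĝ : Integrable (planeFourier g)) {x : ℝ × ℝ} (hx : ContinuousAt g x) :
    planeFourierInv (planeFourier g) x = g x := by
  set e := euclideanTwoEquivProd
  have he : MeasurePreserving e := measurePreserving_euclideanTwoEquivProd
  have h2π : (2 * π : ℝ) ≠ 0 := by positivity
  have hĝe : ∀ ξ, planeFourier g (e ξ)
      = (1 / (2 * π)) • ∫ η, cexp (↑(-⟪ξ, η⟫) * I) • g (e η) := by
    intro ξ
    simp only [planeFourier, inner_eq_euclideanTwoEquivProd]
    exact congrArg _ (he.integral_comp' _).symm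
  have hĜ : Integrable fun ξ => ∫ η, cexp (↑(-⟪ξ, η⟫) * I) • g (e η) := by
    rw [← integrable_smul_iff (one_div_ne_zero h2π)]
    exact ((he.integrable_comp_emb e.measurableEmbedding).mpr hĝ).congr
      (Eventually.of_forall hĝe)
  calc planeFourierInv (planeFourier g) x
      = (1 / (2 * π)) • ∫ ξ, cexp (↑⟪ξ, e.symm x⟫ * I) • planeFourier g (e ξ) := by
        simp only [planeFourierInv, inner_eq_euclideanTwoEquivProd]
        exact congrArg _ (he.integral_comp' _).symm
    _ = (1 / (2 * π)) ^ 2 •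
          ∫ ξ, cexp (↑⟪ξ, e.symm x⟫ * I) • ∫ η, cexp (↑(-⟪ξ, η⟫) * I) • g (e η) := by
        simp_rw [hĝe, smul_comm (cexp _) (1 / (2 * π)), MeasureTheory.integral_smul, smul_smul, sq]
    _ = g x := by
        rw [integral_exp_inner_smul_integral_exp_neg_inner (g := fun y => g (e y))
          ((he.integrable_comp_emb e.measurableEmbedding).mpr hg)
          (hx.comp_of_eq continuous_euclideanTwoEquivProd.continuousAt (by simp)) hĜ,
          finrank_euclideanSpace_fin, smul_smul, ← mul_pow, one_div_mul_cancel h2π, one_pow,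
          one_smul, e.apply_symm_apply]

end FourierInversion

section Reflection

variable {α F : Type*} [MeasureSpace α] [SFinite (volume : Measure α)] [NormedAddCommGroup F]

theorem measurePreserving_prodCongr_refl_neg :
    MeasurePreserving ((MeasurableEquiv.refl α).prodCongr (MeasurableEquiv.neg ℝ)) := by
  rw [Measure.volume_eq_prod]
  exact (MeasurePreserving.id volume).prod (Measure.measurePreserving_neg volume)

theorem integrable_comp_neg_snd_iff {G : α × ℝ → F} :
    Integrable (fun w : α × ℝ => G (w.1, -w.2)) ↔ Integrable G :=
  measurePreserving_prodCongr_refl_neg.integrable_comp_emb (MeasurableEquiv.measurableEmbedding _)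

theorem integral_comp_neg_snd [NormedSpace ℝ F] (G : α × ℝ → F) :
    ∫ w : α × ℝ, G (w.1, -w.2) = ∫ w, G w :=
  measurePreserving_prodCongr_refl_neg.integral_comp' G

end Reflection

theorem expI_eq (t : ℝ) : expI t = (cos t : ℍ[ℝ]) + sin t • qi := by
  ext <;> simp [expI] <;> simp [qi]

theorem expJ_eq (t : ℝ) : expJ t = (cos t : ℍ[ℝ]) + sin t • qj := by
  ext <;> simp [expJ] <;> simp [qj]

theorem continuous_expI : Continuous expI := by
  simp_rw [funext expI_eq]
  exact (Quaternion.continuous_coe.comp continuous_cos).add (continuous_sin.smul continuous_const)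

theorem continuous_expJ : Continuous expJ := by
  simp_rw [funext expJ_eq]
  exact (Quaternion.continuous_coe.comp continuous_cos).add (continuous_sin.smul continuous_const)

theorem norm_expI (t : ℝ) : ‖expI t‖ = 1 := by
  have h : ‖expI t‖ * ‖expI t‖ = 1 := by
    rw [← Quaternion.normSq_eq_norm_mul_self, Quaternion.normSq_def']
    simp [expI]
  exact (mul_self_eq_one_iff.mp h).resolve_right (by linarith [norm_nonneg (expI t)])

theorem norm_expJ (t : ℝ) : ‖expJ t‖ = 1 := by
  have h : ‖expJ t‖ * ‖expJ t‖ = 1 := by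
    rw [← Quaternion.normSq_eq_norm_mul_self, Quaternion.normSq_def']
    simp [expJ]
  exact (mul_self_eq_one_iff.mp h).resolve_right (by linarith [norm_nonneg (expJ t)])

noncomputable def plusPart : ℍ[ℝ] →L[ℝ] ℂ :=
  LinearMap.toContinuousLinearMap
    { toFun := fun q => ⟨q.re + q.imK, q.imI - q.imJ⟩
      map_add' := fun p q => by apply Complex.ext <;> simp <;> ring
      map_smul' := fun r q => by apply Complex.ext <;> simp <;> ring }

noncomputable def minusPart : ℍ[ℝ] →L[ℝ] ℂ :=
  LinearMap.toContinuousLinearMap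
    { toFun := fun q => ⟨q.re - q.imK, q.imI + q.imJ⟩
      map_add' := fun p q => by apply Complex.ext <;> simp <;> ring
      map_smul' := fun r q => by apply Complex.ext <;> simp <;> ring }

@[simp] theorem plusPart_apply (q : ℍ[ℝ]) : plusPart q = ⟨q.re + q.imK, q.imI - q.imJ⟩ := rfl

@[simp] theorem minusPart_apply (q : ℍ[ℝ]) : minusPart q = ⟨q.re - q.imK, q.imI + q.imJ⟩ := rfl

theorem ext_of_plusPart_of_minusPart {p q : ℍ[ℝ]} (hP : plusPart p = plusPart q)
    (hM : minusPart p = minusPart q) : p = q := by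
  simp only [plusPart_apply, minusPart_apply, Complex.mk.injEq] at hP hM
  ext <;> linarith

theorem plusPart_expI_mul_mul_expJ (a b : ℝ) (q : ℍ[ℝ]) :
    plusPart (expI a * q * expJ b) = cexp (↑(a - b) * I) • plusPart q := by
  apply Complex.ext <;>
    simp only [plusPart_apply, Quaternion.re_mul, Quaternion.imI_mul, Quaternion.imJ_mul,
      Quaternion.imK_mul, smul_eq_mul, Complex.mul_re, Complex.mul_im,
      Complex.exp_ofReal_mul_I_re, Complex.exp_ofReal_mul_I_im, cos_sub, sin_sub] <;>
    simp [expI, expJ] <;> ring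

theorem minusPart_expI_mul_mul_expJ (a b : ℝ) (q : ℍ[ℝ]) :
    minusPart (expI a * q * expJ b) = cexp (↑(a + b) * I) • minusPart q := by
  apply Complex.ext <;>
    simp only [minusPart_apply, Quaternion.re_mul, Quaternion.imI_mul, Quaternion.imJ_mul,
      Quaternion.imK_mul, smul_eq_mul, Complex.mul_re, Complex.mul_im,
      Complex.exp_ofReal_mul_I_re, Complex.exp_ofReal_mul_I_im, cos_add, sin_add] <;>
    simp [expI, expJ] <;> ring

section TwoSidedKernel

variable {α : Type*} [MeasurableSpace α] {μ : Measure α} {g : α → ℍ[ℝ]} {a b : α → ℝ}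

theorem MeasureTheory.Integrable.expI_mul_mul_expJ (hg : Integrable g μ) (ha : Measurable a)
    (hb : Measurable b) : Integrable (fun v => expI (a v) * g v * expJ (b v)) μ := by
  refine hg.norm.mono' ?_ (Eventually.of_forall fun v => ?_)
  · exact ((continuous_expI.comp_aestronglyMeasurable ha.aestronglyMeasurable).mul hg.1).mul
      (continuous_expJ.comp_aestronglyMeasurable hb.aestronglyMeasurable)
  · simp [norm_expI, norm_expJ]

theorem plusPart_integral_expI_mul_mul_expJ (hg : Integrable g μ) (ha : Measurable a)
    (hb : Measurable b) :
    plusPart (∫ v, expI (a v) * g v * expJ (b v) ∂μ)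
      = ∫ v, cexp (↑(a v - b v) * I) • plusPart (g v) ∂μ := by
  rw [← plusPart.integral_comp_comm (hg.expI_mul_mul_expJ ha hb)]
  simp_rw [plusPart_expI_mul_mul_expJ]

theorem minusPart_integral_expI_mul_mul_expJ (hg : Integrable g μ) (ha : Measurable a)
    (hb : Measurable b) :
    minusPart (∫ v, expI (a v) * g v * expJ (b v) ∂μ)
      = ∫ v, cexp (↑(a v + b v) * I) • minusPart (g v) ∂μ := by
  rw [← minusPart.integral_comp_comm (hg.expI_mul_mul_expJ ha hb)]
  simp_rw [minusPart_expI_mul_mul_expJ]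

end TwoSidedKernel

theorem plusPart_QFT {f : ℝ × ℝ → ℍ[ℝ]} (hf : Integrable f) (w₁ w₂ : ℝ) :
    plusPart (QFT f w₁ w₂) = planeFourier (plusPart ∘ f) (w₁, -w₂) := by
  rw [QFT, map_smul, plusPart_integral_expI_mul_mul_expJ hf (by fun_prop) (by fun_prop),
    planeFourier]
  congr 2 with y
  rw [Function.comp_apply]
  push_cast
  ring_nf

theorem minusPart_QFT {f : ℝ × ℝ → ℍ[ℝ]} (hf : Integrable f) (w₁ w₂ : ℝ) :
    minusPart (QFT f w₁ w₂) = planeFourier (minusPart ∘ f) (w₁, w₂) := by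
  rw [QFT, map_smul, minusPart_integral_expI_mul_mul_expJ hf (by fun_prop) (by fun_prop),
    planeFourier]
  congr 2 with y
  rw [Function.comp_apply]
  push_cast
  ring_nf

/-- Inversion theorem for the two-sided quaternion Fourier transform:
if `f : ℝ² → ℍ` is continuous and integrable and `F[f]` is integrable, then for every
`(x₁,x₂)`, `(1/(2π)) ∫ exp(i w₁ x₁) F[f](w₁,w₂) exp(j w₂ x₂) dw = f(x₁,x₂)`. -/
theorem qft_inversion (f : ℝ × ℝ → ℍ[ℝ]) (hc : Continuous f) (hf : Integrable f)
    (hFf : Integrable (fun w : ℝ × ℝ => QFT f w.1 w.2)) (x : ℝ × ℝ) :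
    (1 / (2 * π)) • ∫ w : ℝ × ℝ, expI (w.1 * x.1) * QFT f w.1 w.2 * expJ (w.2 * x.2)
      = f x := by
  have hP : Integrable (planeFourier (plusPart ∘ f)) := by
    rw [← integrable_comp_neg_snd_iff]
    simpa only [plusPart_QFT hf] using plusPart.integrable_comp hFf
  have hM : Integrable (planeFourier (minusPart ∘ f)) := by
    simpa only [minusPart_QFT hf] using minusPart.integrable_comp hFf
  apply ext_of_plusPart_of_minusPart
  · trans planeFourierInv (planeFourier (plusPart ∘ f)) x
    · rw [map_smul, plusPart_integral_expI_mul_mul_expJ hFf (by fun_prop) (by fun_prop),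
        planeFourierInv, ← integral_comp_neg_snd]
      simp_rw [plusPart_QFT hf]
      congr 2 with w
      push_cast
      ring_nf
    · exact (plusPart.integrable_comp hf).planeFourierInv_planeFourier_eq hP
        (plusPart.continuous.comp hc).continuousAt
  · trans planeFourierInv (planeFourier (minusPart ∘ f)) x
    · rw [map_smul, minusPart_integral_expI_mul_mul_expJ hFf (by fun_prop) (by fun_prop),
        planeFourierInv]
      simp_rw [minusPart_QFT hf]
    · exact (minusPart.integrable_comp hf).planeFourierInv_planeFourier_eq hM
        (minusPart.continuous.comp hc).continuousAt
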